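/- arXiv:0808.2382 — 4 statements merged into one kernel-verified Lean document; each statement's English description precedes it below -/
import Mathlib

section
/- Let $n \ge 2$ and $\eta \in \mathbb{Z}_2^n$ with $|\eta|$ even. Let $A$ be the adjacency matrix of the augmented hypercube $Q_n^\eta$ and let $\psi_t = \exp(-itA)\delta_{0_n}$ be the continuous-time quantum walk starting at the vertex $0_n$. Then at time $t^\star = \pi/4$ the walk is instantaneous uniform mixing: $|\psi_{t^\star}(v)|^2 = 2^{-n}$ for every vertex $v \in \mathbb{Z}_2^n$. -/
open Matrix Complex Finset

/-- Hamming weight of a vector in `(ZMod 2)^n`. -/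
def wt {n : ℕ} (x : Fin n → ZMod 2) : ℕ := (Finset.univ.filter fun i => x i = 1).card

/-- Inner product modulo 2. -/
def dot {n : ℕ} (a x : Fin n → ZMod 2) : ZMod 2 := ∑ i, a i * x i

/-- Adjacency matrix of the augmented hypercube `Q_n^η`:
`A[x,y] = 1` iff `x ⊕ y` is a standard unit vector or equals `η`. -/
def adjQeta {n : ℕ} (η : Fin n → ZMod 2) :
    Matrix (Fin n → ZMod 2) (Fin n → ZMod 2) ℂ :=
  Matrix.of fun x y =>
    if (∃ j : Fin n, x + y = Pi.single j 1) ∨ x + y = η then 1 else 0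

/-- Continuous-time quantum walk `ψ_t = exp(-itA) ψ₀`. -/
noncomputable def walk {V : Type*} [Fintype V] [DecidableEq V]
    (A : Matrix V V ℂ) (ψ0 : V → ℂ) (t : ℝ) : V → ℂ :=
  (NormedSpace.exp ((-(t : ℂ) * Complex.I) • A)).mulVec ψ0

/-!
The Walsh characters `x ↦ (-1)^(a·x)` diagonalize every Cayley matrix of `(ZMod 2)ⁿ` with
generating set `S`, the eigenvalue of the character `a` being `λₐ = ∑ u ∈ S, (-1)^(a·u)`, so the
walk from `0` has amplitudes `2⁻ⁿ ∑ₐ (-1)^(a·v) exp(-itλₐ)`. At `t = π/4` every generator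
contributes a factor `exp(∓iπ/4) = (1 ∓ i)/√2`, and the sum over `a` factors over the coordinates:
for `Q_n^η` the amplitude at `v` becomes `((-i)^|v| - i (-i)^|v ⊕ η|) / √2^(n+1)`. Since
`(-i)^|v ⊕ η| = (-i)^|v| (-i)^|η| (-1)^(v·η)` and `(-i)^|η| = ±1` for even `|η|`, the bracket is
`(-i)^|v| (1 ± i)`, of modulus `√2`.
-/

section ZModTwo

variable {R : Type*} [CommRing R]

lemma zmod_two_eq_zero_or_one (s : ZMod 2) : s = 0 ∨ s = 1 := by
  revert s; decide

lemma neg_one_pow_val_add (s t : ZMod 2) :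
    (-1 : R) ^ (s + t).val = (-1) ^ s.val * (-1) ^ t.val := by
  rw [ZMod.val_add, ← neg_one_pow_eq_pow_mod_two, pow_add]

lemma neg_one_pow_val_sum {ι : Type*} (s : Finset ι) (f : ι → ZMod 2) :
    (-1 : R) ^ (∑ i ∈ s, f i).val = ∏ i ∈ s, (-1) ^ (f i).val := by
  classical
  induction s using Finset.induction_on with
  | empty => simp
  | insert i s hi ih => rw [sum_insert hi, prod_insert hi, neg_one_pow_val_add, ih]

lemma sum_pi_zmod_two_prod {ι : Type*} [Fintype ι] [DecidableEq ι] (g : ι → ZMod 2 → R) :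
    ∑ x : ι → ZMod 2, ∏ j, g j (x j) = ∏ j, (g j 0 + g j 1) := by
  rw [← Fintype.prod_sum]
  exact prod_congr rfl fun j _ => Fin.sum_univ_two (g j)

lemma wt_eq_sum_val {n : ℕ} (x : Fin n → ZMod 2) : wt x = ∑ j, (x j).val := by
  rw [wt, card_filter]
  refine sum_congr rfl fun j _ => ?_
  obtain h | h := zmod_two_eq_zero_or_one (x j) <;> simp [h, ZMod.val_one'']

end ZModTwo

section Walsh

variable {n : ℕ}

def walsh (a x : Fin n → ZMod 2) : ℂ := (-1) ^ (dot a x).val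

lemma walsh_eq_prod (a x : Fin n → ZMod 2) : walsh a x = ∏ j, (-1) ^ (a j * x j).val :=
  neg_one_pow_val_sum _ _

lemma walsh_comm (a x : Fin n → ZMod 2) : walsh a x = walsh x a := by
  simp only [walsh, dot, mul_comm]

lemma walsh_add_right (a x y : Fin n → ZMod 2) : walsh a (x + y) = walsh a x * walsh a y := by
  simp only [walsh, dot, Pi.add_apply, mul_add, sum_add_distrib, neg_one_pow_val_add]

lemma walsh_add_left (a b x : Fin n → ZMod 2) : walsh (a + b) x = walsh a x * walsh b x := by
  simp only [walsh_comm _ x, walsh_add_right]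

lemma walsh_zero_left (x : Fin n → ZMod 2) : walsh 0 x = 1 := by
  simp [walsh, dot]

lemma walsh_single_right (a : Fin n → ZMod 2) (j : Fin n) :
    walsh a (Pi.single j 1) = (-1) ^ (a j).val := by
  simp [walsh, dot, Pi.single_apply]

lemma sum_walsh (a : Fin n → ZMod 2) :
    ∑ x, walsh a x = if a = 0 then 2 ^ n else 0 := by
  simp only [walsh_eq_prod]
  rw [sum_pi_zmod_two_prod fun j s => (-1 : ℂ) ^ (a j * s).val]
  split_ifs with ha
  · simp [ha, one_add_one_eq_two]
  · obtain ⟨j, hj⟩ : ∃ j, a j ≠ 0 := Function.ne_iff.mp ha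
    refine prod_eq_zero (mem_univ j) ?_
    rw [(zmod_two_eq_zero_or_one (a j)).resolve_left hj]
    norm_num [show (1 : ZMod 2).val = 1 from rfl]

noncomputable def walshMatrix (n : ℕ) : Matrix (Fin n → ZMod 2) (Fin n → ZMod 2) ℂ :=
  of fun x a => walsh a x

lemma walshMatrix_mul_self : walshMatrix n * walshMatrix n = (2 ^ n : ℂ) • 1 := by
  ext x y
  simp only [walshMatrix, mul_apply, of_apply, walsh_comm _ x, ← walsh_add_left, sum_walsh,
    Matrix.smul_apply, one_apply, ← ZModModule.sub_eq_add, sub_eq_zero, smul_eq_mul,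
    mul_ite, mul_one, mul_zero]

lemma walshMatrix_mul_inv_smul_self :
    walshMatrix n * ((2 ^ n : ℂ)⁻¹ • walshMatrix n) = 1 := by
  rw [Matrix.mul_smul, walshMatrix_mul_self, smul_smul, inv_mul_cancel₀ (by norm_num), one_smul]

end Walsh

lemma exp_smul_eq_of_mul_eq_mul_diagonal {m : Type*} [Fintype m] [DecidableEq m]
    {A P Q : Matrix m m ℂ} {d : m → ℂ} (hPQ : P * Q = 1) (h : A * P = P * diagonal d) (c : ℂ) :
    NormedSpace.exp (c • A) = P * diagonal (fun i => Complex.exp (c * d i)) * Q := by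
  have hA : c • A = P * diagonal (c • d) * Q := by
    rw [diagonal_smul, Matrix.mul_smul, Matrix.smul_mul, ← h, Matrix.mul_assoc, hPQ,
      Matrix.mul_one]
  have hconj := Matrix.exp_units_conj ⟨P, Q, hPQ, mul_eq_one_comm.mp hPQ⟩ (diagonal (c • d))
  rw [hA]
  refine hconj.trans ?_
  rw [Matrix.exp_diagonal]
  congr
  funext i
  simp [Complex.exp_eq_exp_ℂ]

section Cayley

variable {n : ℕ}

def cayleyMatrix (S : Finset (Fin n → ZMod 2)) : Matrix (Fin n → ZMod 2) (Fin n → ZMod 2) ℂ :=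
  of fun x y => if x + y ∈ S then 1 else 0

lemma cayleyMatrix_mul_walshMatrix (S : Finset (Fin n → ZMod 2)) :
    cayleyMatrix S * walshMatrix n = walshMatrix n * diagonal fun a => ∑ u ∈ S, walsh a u := by
  ext x a
  rw [mul_diagonal, mul_apply, ← Equiv.sum_comp (Equiv.addLeft x)]
  simp only [cayleyMatrix, walshMatrix, of_apply, Equiv.coe_addLeft, ← add_assoc,
    ZModModule.add_self, zero_add, ite_mul, one_mul, zero_mul, sum_ite_mem, univ_inter,
    walsh_add_right, mul_sum]

lemma walk_cayleyMatrix_apply (S : Finset (Fin n → ZMod 2)) (t : ℝ) (v : Fin n → ZMod 2) :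
    walk (cayleyMatrix S) (Pi.single 0 1) t v =
      (2 ^ n)⁻¹ * ∑ a, walsh a v * Complex.exp (-t * I * ∑ u ∈ S, walsh a u) := by
  rw [walk, exp_smul_eq_of_mul_eq_mul_diagonal walshMatrix_mul_inv_smul_self
    (cayleyMatrix_mul_walshMatrix S), mulVec_single_one, col_apply, mul_apply]
  simp only [mul_diagonal, Matrix.smul_apply, walshMatrix, of_apply,
    walsh_zero_left, smul_eq_mul, mul_one, mul_sum]
  exact sum_congr rfl fun a _ => mul_comm _ _

end Cayley

lemma exp_neg_pi_div_four_mul_I_mul_neg_one_pow (k : ℕ) :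
    Complex.exp (-↑(Real.pi / 4) * I * (-1) ^ k) = (1 - I * (-1) ^ k) / Real.sqrt 2 := by
  have hsqrt : (Real.sqrt 2 : ℂ) ≠ 0 := by exact_mod_cast (Real.sqrt_pos.mpr two_pos).ne'
  have hsq : (Real.sqrt 2 : ℂ) * Real.sqrt 2 = 2 := by
    exact_mod_cast Real.mul_self_sqrt zero_le_two
  rw [eq_div_iff hsqrt]
  rcases neg_one_pow_eq_or ℂ k with h | h <;> rw [h]
  · rw [mul_one, ← ofReal_neg, exp_mul_I, ← ofReal_cos, ← ofReal_sin, Real.cos_neg,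
      Real.sin_neg, Real.cos_pi_div_four, Real.sin_pi_div_four]
    push_cast
    linear_combination (1 - I) / 2 * hsq
  · rw [mul_neg_one, neg_mul, neg_neg, exp_mul_I, ← ofReal_cos, ← ofReal_sin, Real.cos_pi_div_four,
      Real.sin_pi_div_four]
    push_cast
    linear_combination (1 + I) / 2 * hsq

lemma norm_one_sub_I_mul_neg_one_pow (k : ℕ) : ‖1 - I * (-1) ^ k‖ = Real.sqrt 2 := by
  rcases neg_one_pow_eq_or ℂ k with h | h <;>
  · rw [h, Complex.norm_def, Complex.normSq_apply]
    norm_num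

lemma walk_cayleyMatrix_pi_div_four {n : ℕ} (S : Finset (Fin n → ZMod 2)) (v : Fin n → ZMod 2) :
    walk (cayleyMatrix S) (Pi.single 0 1) (Real.pi / 4) v =
      ((2 : ℂ) ^ n * (Real.sqrt 2 : ℂ) ^ S.card)⁻¹ *
        ∑ a, walsh a v * ∏ u ∈ S, (1 - I * walsh a u) := by
  rw [walk_cayleyMatrix_apply, mul_inv, mul_assoc]
  congr 1
  rw [mul_sum]
  refine sum_congr rfl fun a _ => ?_
  simp only [mul_sum, exp_sum, walsh, exp_neg_pi_div_four_mul_I_mul_neg_one_pow, prod_div_distrib,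
    prod_const]
  ring

section UnitVectors

variable {n : ℕ}

def unitVectors (n : ℕ) : Finset (Fin n → ZMod 2) := univ.image fun j => Pi.single j 1

lemma single_one_injective :
    Function.Injective fun j : Fin n => (Pi.single j 1 : Fin n → ZMod 2) :=
  fun i j h => by simpa [Pi.single_apply, eq_comm] using congrFun h i

lemma card_unitVectors : (unitVectors n).card = n := by
  rw [unitVectors, card_image_of_injective _ single_one_injective, card_univ, Fintype.card_fin]

lemma adjQeta_eq_cayleyMatrix (η : Fin n → ZMod 2) :
    adjQeta η = cayleyMatrix (insert η (unitVectors n)) := by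
  ext x y
  simp [adjQeta, cayleyMatrix, unitVectors, eq_comm, or_comm]

lemma wt_single_one (j : Fin n) : wt (Pi.single j 1 : Fin n → ZMod 2) = 1 := by
  rw [wt, card_eq_one]
  exact ⟨j, by ext i; by_cases h : i = j <;> simp [h]⟩

lemma notMem_unitVectors_of_even_wt {η : Fin n → ZMod 2} (hη : Even (wt η)) :
    η ∉ unitVectors n := by
  simp only [unitVectors, mem_image, mem_univ, true_and, not_exists]
  rintro j rfl
  simp [wt_single_one] at hη

lemma sum_walsh_mul_prod_unitVectors (w : Fin n → ZMod 2) :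
    ∑ a, walsh a w * ∏ u ∈ unitVectors n, (1 - I * walsh a u) = 2 ^ n * (-I) ^ wt w := by
  have hcoord : ∀ s : ZMod 2, (-1 : ℂ) ^ (0 * s).val * (1 - I * (-1) ^ (0 : ZMod 2).val)
      + (-1) ^ (1 * s).val * (1 - I * (-1) ^ (1 : ZMod 2).val) = 2 * (-I) ^ s.val := by
    intro s
    obtain rfl | rfl := zmod_two_eq_zero_or_one s
    · norm_num [ZMod.val_one'']
    · norm_num [ZMod.val_one'']
      ring
  simp only [unitVectors, prod_image fun i _ j _ h => single_one_injective h,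
    walsh_single_right]
  simp only [walsh_eq_prod, ← prod_mul_distrib]
  rw [sum_pi_zmod_two_prod fun j s => (-1) ^ (s * w j).val * (1 - I * (-1) ^ s.val)]
  simp only [hcoord, prod_mul_distrib, prod_const, card_univ, Fintype.card_fin,
    prod_pow_eq_pow_sum, wt_eq_sum_val]

lemma neg_I_pow_wt_add (v η : Fin n → ZMod 2) :
    (-I) ^ wt (v + η) = (-I) ^ wt v * (-I) ^ wt η * walsh v η := by
  simp only [wt_eq_sum_val, ← prod_pow_eq_pow_sum, walsh_eq_prod, ← prod_mul_distrib]
  refine prod_congr rfl fun j _ => ?_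
  obtain h | h := zmod_two_eq_zero_or_one (v j) <;>
    obtain h' | h' := zmod_two_eq_zero_or_one (η j) <;>
    norm_num [h, h', ZMod.val_one'', show (2 : ZMod 2).val = 0 from rfl]

end UnitVectors

lemma walk_adjQeta_pi_div_four {n : ℕ} {η : Fin n → ZMod 2} (hη : η ∉ unitVectors n)
    (v : Fin n → ZMod 2) :
    walk (adjQeta η) (Pi.single 0 1) (Real.pi / 4) v =
      (-I) ^ wt v * (1 - I * ((-I) ^ wt η * walsh v η)) / Real.sqrt 2 ^ (n + 1) := by
  have hsplit : ∀ a (z : ℂ),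
      walsh a v * ((1 - I * walsh a η) * z) = walsh a v * z - I * (walsh a (v + η) * z) := by
    intro a z
    rw [walsh_add_right]
    ring
  rw [adjQeta_eq_cayleyMatrix, walk_cayleyMatrix_pi_div_four, card_insert_of_notMem hη,
    card_unitVectors]
  simp only [prod_insert hη, hsplit, sum_sub_distrib, ← mul_sum, sum_walsh_mul_prod_unitVectors,
    neg_I_pow_wt_add]
  field_simp

theorem augmented_hypercube_uniform_mixing_of_even_general (n : ℕ)
    (η : Fin n → ZMod 2) (hη : Even (wt η)) :
    ∀ v : Fin n → ZMod 2,
      ‖walk (adjQeta η) (Pi.single (0 : Fin n → ZMod 2) 1)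
        (Real.pi / 4) v‖ ^ 2 = 1 / 2 ^ n := by
  intro v
  obtain ⟨m, hm⟩ := hη
  have hsign : (-I) ^ wt η * walsh v η = (-1) ^ (m + (dot v η).val) := by
    rw [hm, ← two_mul, pow_mul, neg_sq, I_sq, pow_add, walsh]
  rw [walk_adjQeta_pi_div_four (notMem_unitVectors_of_even_wt ⟨m, hm⟩), hsign, norm_div,
    norm_mul, norm_one_sub_I_mul_neg_one_pow, norm_pow, norm_pow, norm_neg, norm_I, one_pow,
    one_mul, norm_real, Real.norm_of_nonneg (Real.sqrt_nonneg 2)]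
  have hsqrt : Real.sqrt 2 / Real.sqrt 2 ^ (n + 1) = (Real.sqrt 2 ^ n)⁻¹ := by
    rw [pow_succ, div_mul_cancel_right₀ (Real.sqrt_pos.mpr two_pos).ne']
  rw [hsqrt, inv_pow, ← pow_mul, mul_comm, pow_mul, Real.sq_sqrt zero_le_two, one_div]

/-- If `|η|` is even, the quantum walk on `Q_n^η` starting at `0_n` is
instantaneous uniform mixing at time `π/4`. -/
theorem augmented_hypercube_uniform_mixing_of_even (n : ℕ) (hn : 2 ≤ n)
    (η : Fin n → ZMod 2) (hη : Even (wt η)) :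
    ∀ v : Fin n → ZMod 2,
      ‖walk (adjQeta η) (Pi.single (0 : Fin n → ZMod 2) 1)
        (Real.pi / 4) v‖ ^ 2 = 1 / 2 ^ n :=
  augmented_hypercube_uniform_mixing_of_even_general n η hη
end

section
/- Let $G$ and $H$ be finite simple graphs with adjacency matrices $A_G$ and $A_H$, let $g_0$ be a vertex of $G$ and $h_0$ a vertex of $H$, and let $t^\star \in \mathbb{R}$. Then the continuous-time quantum walk on the Cartesian product $G \oplus H$ starting at vertex $(g_0, h_0)$ is instantaneous uniform mixing at time $t^\star$ if and only if the quantum walks on $G$ starting at $g_0$ and on $H$ starting at $h_0$ are both instantaneous uniform mixing at time $t^\star$. -/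
open Matrix Complex Kronecker

/-! Since `A ⊗ₖ 1` and `1 ⊗ₖ B` commute, `exp (c • (A ⊗ₖ 1 + 1 ⊗ₖ B)) = exp (c • A) ⊗ₖ exp (c • B)`,
so the amplitude of the product walk at `(g, h)` is the product of the amplitudes of the two
factor walks at `g` and `h`. For Hermitian `A` the walk is unitary, so the squared amplitudes form
probability vectors `a` and `b`; and `a g * b h` is constant if and only if `a` and `b` are, since
summing over one coordinate recovers the other factor. -/

open NormedSpace

section TopologicalRing

variable {𝔸 𝔹 : Type*} [Ring 𝔸] [TopologicalSpace 𝔸] [IsTopologicalRing 𝔸] [Algebra ℚ 𝔸]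
  [Ring 𝔹] [TopologicalSpace 𝔹] [IsTopologicalRing 𝔹] [T2Space 𝔹] [Algebra ℚ 𝔹]

theorem NormedSpace.map_exp_of_leftInverse {F : Type*} [FunLike F 𝔸 𝔹] [RingHomClass F 𝔸 𝔹]
    (f : F) (hf : Continuous f) {g : 𝔹 → 𝔸} (hg : Continuous g) (hgf : Function.LeftInverse g f)
    (x : 𝔸) : f (exp x) = exp (f x) := by
  -- `f` is a closed embedding, so it commutes with `tsum` without any summability hypothesis.
  simp only [exp_eq_tsum_rat, hgf.map_tsum _ hf hg, map_rat_smul, map_pow]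

theorem Pi.exp_const [T2Space 𝔸] (ι : Type*) (x : 𝔸) :
    exp (Function.const ι x) = Function.const ι (exp x) := by
  obtain _ | ⟨⟨i⟩⟩ := isEmpty_or_nonempty ι
  · exact Subsingleton.elim _ _
  · exact (map_exp_of_leftInverse (Pi.constRingHom ι 𝔸) (continuous_pi fun _ => continuous_id)
      (continuous_apply i) (fun _ => rfl) x).symm

end TopologicalRing

namespace Matrix

variable {m n 𝔸 : Type*} [Fintype m] [DecidableEq m] [Fintype n] [DecidableEq n]

section TopologicalRing

variable [Ring 𝔸] [TopologicalSpace 𝔸] [IsTopologicalRing 𝔸] [T2Space 𝔸] [Algebra ℚ 𝔸]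

theorem exp_reindex (e : m ≃ n) (A : Matrix m m 𝔸) :
    exp (reindex e e A) = reindex e e (exp A) :=
  (map_exp_of_leftInverse (reindexAlgEquiv ℚ 𝔸 e) (continuous_id.matrix_reindex e e)
    (continuous_id.matrix_reindex e.symm e.symm) (reindexAlgEquiv ℚ 𝔸 e).left_inv A).symm

theorem exp_kronecker_one (A : Matrix m m 𝔸) :
    exp (A ⊗ₖ (1 : Matrix n n 𝔸)) = exp A ⊗ₖ (1 : Matrix n n 𝔸) := by
  rw [kronecker_one, kronecker_one, exp_blockDiagonal]
  exact congrArg blockDiagonal (Pi.exp_const n A)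

theorem exp_one_kronecker (A : Matrix n n 𝔸) :
    exp ((1 : Matrix m m 𝔸) ⊗ₖ A) = (1 : Matrix m m 𝔸) ⊗ₖ exp A := by
  rw [one_kronecker, one_kronecker, exp_reindex, exp_blockDiagonal]
  exact congrArg _ (congrArg blockDiagonal (Pi.exp_const m A))

end TopologicalRing

variable [NormedCommRing 𝔸] [NormedAlgebra ℚ 𝔸] [CompleteSpace 𝔸]

theorem exp_kronecker_one_add_one_kronecker (A : Matrix m m 𝔸) (B : Matrix n n 𝔸) :
    exp (A ⊗ₖ (1 : Matrix n n 𝔸) + (1 : Matrix m m 𝔸) ⊗ₖ B) = exp A ⊗ₖ exp B := by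
  have hcomm : Commute (A ⊗ₖ (1 : Matrix n n 𝔸)) ((1 : Matrix m m 𝔸) ⊗ₖ B) := by
    simp only [Commute, SemiconjBy, ← mul_kronecker_mul, Matrix.mul_one, Matrix.one_mul]
  rw [exp_add_of_commute _ _ hcomm, exp_kronecker_one, exp_one_kronecker, ← mul_kronecker_mul,
    Matrix.mul_one, Matrix.one_mul]

end Matrix

theorem forall_mul_eq_one_div_card_iff {α β K : Type*} [Fintype α] [Fintype β] [Field K]
    [CharZero K] {a : α → K} {b : β → K} (ha : ∑ x, a x = 1) (hb : ∑ y, b y = 1) :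
    (∀ p : α × β, a p.1 * b p.2 = 1 / Fintype.card (α × β)) ↔
      (∀ x, a x = 1 / Fintype.card α) ∧ ∀ y, b y = 1 / Fintype.card β := by
  have hα : (Fintype.card α : K) ≠ 0 := Nat.cast_ne_zero.mpr <| Finset.card_ne_zero.mpr <|
    Finset.nonempty_of_sum_ne_zero (ha ▸ one_ne_zero)
  have hβ : (Fintype.card β : K) ≠ 0 := Nat.cast_ne_zero.mpr <| Finset.card_ne_zero.mpr <|
    Finset.nonempty_of_sum_ne_zero (hb ▸ one_ne_zero)
  rw [Fintype.card_prod, Nat.cast_mul]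
  refine ⟨fun h => ⟨fun x => ?_, fun y => ?_⟩,
    fun ⟨h₁, h₂⟩ p => by rw [h₁, h₂, one_div_mul_one_div]⟩
  · calc a x = ∑ y, a x * b y := by rw [← Finset.mul_sum, hb, mul_one]
      _ = Fintype.card β * (1 / (Fintype.card α * Fintype.card β)) := by
        simp [fun y => h (x, y)]
      _ = 1 / Fintype.card α := by field_simp
  · calc b y = ∑ x, a x * b y := by rw [← Finset.sum_mul, ha, one_mul]
      _ = Fintype.card α * (1 / (Fintype.card α * Fintype.card β)) := by
        simp [fun x => h (x, y)]
      _ = 1 / Fintype.card β := by field_simp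

theorem Matrix.sum_norm_sq_apply_of_mem_unitaryGroup {𝕜 n : Type*} [RCLike 𝕜] [Fintype n]
    [DecidableEq n] {U : Matrix n n 𝕜} (hU : U ∈ unitaryGroup n 𝕜) (j : n) :
    ∑ i, ‖U i j‖ ^ 2 = 1 := by
  have h : (star U * U) j j = 1 := by rw [mem_unitaryGroup_iff'.mp hU, one_apply_eq]
  simp only [mul_apply, star_apply, ← starRingEnd_apply, RCLike.conj_mul] at h
  exact_mod_cast h

section walk

variable {V W : Type*} [Fintype V] [DecidableEq V] [Fintype W] [DecidableEq W]

def IsUniformMixing (A : Matrix V V ℂ) (v : V) (t : ℝ) : Prop :=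
  ∀ w, ‖walk A (Pi.single v 1) t w‖ ^ 2 = 1 / Fintype.card V

theorem walk_single_apply (A : Matrix V V ℂ) (v w : V) (t : ℝ) :
    walk A (Pi.single v 1) t w = exp ((-(t : ℂ) * I) • A) w v := by
  simp [walk, mulVec_single]

theorem Matrix.IsHermitian.exp_smul_mem_unitaryGroup {A : Matrix V V ℂ} (hA : A.IsHermitian)
    (t : ℝ) : NormedSpace.exp ((-(t : ℂ) * I) • A) ∈ unitaryGroup V ℂ := by
  set X := (-(t : ℂ) * I) • A
  have hX : Xᴴ = -X := by simp [X, conjTranspose_smul, hA.eq, neg_smul]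
  rw [mem_unitaryGroup_iff', star_eq_conjTranspose, ← exp_conjTranspose, hX,
    ← exp_add_of_commute _ _ (Commute.refl X).neg_left, neg_add_cancel, NormedSpace.exp_zero]

theorem Matrix.IsHermitian.sum_norm_sq_walk_single {A : Matrix V V ℂ} (hA : A.IsHermitian)
    (v : V) (t : ℝ) : ∑ w, ‖walk A (Pi.single v 1) t w‖ ^ 2 = 1 := by
  simpa only [walk_single_apply] using
    sum_norm_sq_apply_of_mem_unitaryGroup (hA.exp_smul_mem_unitaryGroup t) v

theorem walk_kroneckerSum_single_apply (A : Matrix V V ℂ) (B : Matrix W W ℂ) (v : V) (u : W)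
    (t : ℝ) (x : V × W) :
    walk (A ⊗ₖ (1 : Matrix W W ℂ) + (1 : Matrix V V ℂ) ⊗ₖ B) (Pi.single (v, u) 1) t x =
      walk A (Pi.single v 1) t x.1 * walk B (Pi.single u 1) t x.2 := by
  rw [walk_single_apply, walk_single_apply, walk_single_apply, smul_add, ← smul_kronecker,
    ← kronecker_smul, exp_kronecker_one_add_one_kronecker, kronecker_apply]

theorem Matrix.IsHermitian.isUniformMixing_kroneckerSum_iff {A : Matrix V V ℂ}
    {B : Matrix W W ℂ} (hA : A.IsHermitian) (hB : B.IsHermitian) (v : V) (u : W) (t : ℝ) :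
    IsUniformMixing (A ⊗ₖ (1 : Matrix W W ℂ) + (1 : Matrix V V ℂ) ⊗ₖ B) (v, u) t ↔
      IsUniformMixing A v t ∧ IsUniformMixing B u t := by
  simp only [IsUniformMixing, walk_kroneckerSum_single_apply, norm_mul, mul_pow]
  exact forall_mul_eq_one_div_card_iff (hA.sum_norm_sq_walk_single v t)
    (hB.sum_norm_sq_walk_single u t)

end walk

/-- The quantum walk on the Cartesian product `G ⊕ H` starting at `(g₀, h₀)` is
instantaneous uniform mixing at time `t⋆` iff the walks on `G` and `H` starting
at `g₀` and `h₀` are both instantaneous uniform mixing at time `t⋆`. -/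
theorem cartesian_product_uniform_mixing_iff
    {VG VH : Type*} [Fintype VG] [DecidableEq VG] [Fintype VH] [DecidableEq VH]
    (G : SimpleGraph VG) (H : SimpleGraph VH)
    [DecidableRel G.Adj] [DecidableRel H.Adj]
    (g0 : VG) (h0 : VH) (tstar : ℝ) :
    (∀ w : VG × VH,
        ‖walk ((G.adjMatrix ℂ) ⊗ₖ (1 : Matrix VH VH ℂ)
            + (1 : Matrix VG VG ℂ) ⊗ₖ (H.adjMatrix ℂ))
          (Pi.single (g0, h0) 1) tstar w‖ ^ 2
          = 1 / (Fintype.card (VG × VH))) ↔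
      ((∀ g : VG,
          ‖walk (G.adjMatrix ℂ) (Pi.single g0 1) tstar g‖ ^ 2
            = 1 / (Fintype.card VG)) ∧
       (∀ h : VH,
          ‖walk (H.adjMatrix ℂ) (Pi.single h0 1) tstar h‖ ^ 2
            = 1 / (Fintype.card VH))) :=
  (G.isHermitian_adjMatrix ℂ).isUniformMixing_kroneckerSum_iff (H.isHermitian_adjMatrix ℂ)
    g0 h0 tstar
end

section
/- For all $n \ge 1$ and all $q \ge 5$, the continuous-time quantum walk on the Hamming graph $H(n,q)$ starting at any fixed vertex is not instantaneous uniform mixing at any time: for every $t \in \mathbb{R}$ there exists a vertex $v$ with $|\psi_t(v)|^2 \neq q^{-n}$. -/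
/-!
The characters `χ_x(v) = ∏ᵢ ψ(xᵢ vᵢ)` of `(ℤ/q)ⁿ` are eigenvectors of the Hamming adjacency matrix,
with eigenvalue `∑ᵢ (q·[xᵢ = 0] - 1)`. Expanding `δ_{v₀}` in characters, the amplitude of the walk
at `v` factors as `q⁻ⁿ ∏ᵢ K(vᵢ - v₀ᵢ)` with `K(0) = e^{-it(q-1)} + (q-1)e^{it}` and
`K(δ) = e^{-it(q-1)} - e^{it}` for `δ ≠ 0`. Uniform mixing at `v₀` forces `|K(0)|² = q`, and then
at a neighbour of `v₀` it forces `|K(δ)|² = q`; but `|K(δ)| ≤ 2 < √q` once `q ≥ 5`.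
-/

open Matrix Complex Finset

/-- Adjacency matrix of the Hamming graph `H(n,q)`: vertices are words of
length `n` over a `q`-letter alphabet, adjacent iff they differ in exactly one
coordinate. -/
def adjHamming (n q : ℕ) : Matrix (Fin n → Fin q) (Fin n → Fin q) ℂ :=
  Matrix.of fun u v =>
    if (Finset.univ.filter fun i => u i ≠ v i).card = 1 then 1 else 0

theorem Matrix.exp_mulVec_of_mulVec_eq_smul {V : Type*} [Fintype V] [DecidableEq V]
    {B : Matrix V V ℂ} {w : V → ℂ} {ν : ℂ} (h : B *ᵥ w = ν • w) :
    NormedSpace.exp B *ᵥ w = Complex.exp ν • w := by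
  let _ : NormedRing (Matrix V V ℂ) := Matrix.linftyOpNormedRing
  let _ : NormedAlgebra ℂ (Matrix V V ℂ) := Matrix.linftyOpNormedAlgebra
  let _ : NormedAlgebra ℚ (Matrix V V ℂ) := Matrix.linftyOpNormedAlgebra
  -- Every column of `W` is `w`, so `W * ν = B * W`, and this semiconjugacy survives `exp`.
  let W : Matrix V V ℂ := Matrix.of fun u _ => w u
  have hW : SemiconjBy W (algebraMap ℂ _ ν) B := by
    ext u v
    simpa [W, SemiconjBy, Algebra.algebraMap_eq_smul_one, mul_apply, one_apply, mulVec,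
      dotProduct, mul_comm] using (congrFun h u).symm
  funext u
  have := congrFun (congrFun hW.exp_right u) u
  rw [← NormedSpace.algebraMap_exp_comm, ← Complex.exp_eq_exp_ℂ] at this
  simp only [W, Algebra.algebraMap_eq_smul_one, mul_apply, smul_apply, one_apply, of_apply,
    smul_eq_mul, mul_ite, mul_one, mul_zero, sum_ite_eq', mem_univ, if_true] at this
  rw [Pi.smul_apply, smul_eq_mul, mul_comm]
  exact this.symm

theorem Matrix.exp_mulVec_sum_smul {V ι : Type*} [Fintype V] [DecidableEq V] [Fintype ι]
    {B : Matrix V V ℂ} {w : ι → V → ℂ} {ν : ι → ℂ} (h : ∀ x, B *ᵥ w x = ν x • w x) (c : ι → ℂ) :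
    NormedSpace.exp B *ᵥ ∑ x, c x • w x = ∑ x, (c x * cexp (ν x)) • w x := by
  simp [Matrix.mulVec_sum, Matrix.mulVec_smul, exp_mulVec_of_mulVec_eq_smul (h _), smul_smul]

theorem sum_hammingDist_eq_one {ι α M : Type*} [Fintype ι] [DecidableEq ι] [Fintype α]
    [DecidableEq α] [AddCommMonoid M] (u : ι → α) (f : (ι → α) → M) :
    ∑ v with hammingDist u v = 1, f v =
      ∑ i, ∑ b ∈ univ.erase (u i), f (Function.update u i b) := by
  rw [Finset.sum_sigma' univ fun i => univ.erase (u i)]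
  symm
  refine Finset.sum_bij (fun p _ => Function.update u p.1 p.2) ?_ ?_ ?_ (fun _ _ => rfl)
  · rintro ⟨i, b⟩ hb
    simp only [mem_sigma, mem_univ, mem_erase, true_and, and_true] at hb
    simp only [mem_filter, mem_univ, true_and, hammingDist]
    rw [Finset.card_eq_one]
    refine ⟨i, ?_⟩
    ext j
    rcases eq_or_ne j i with rfl | hj
    · simp [hb.symm]
    · simp [hj]
  · rintro ⟨i, b⟩ hb ⟨j, c⟩ hc h
    simp only [mem_sigma, mem_univ, mem_erase, true_and, and_true] at hb hc
    have hij : i = j := by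
      by_contra hij
      have := congrFun h i
      simp [Function.update_of_ne hij, hb] at this
    subst hij
    simpa using congrFun h i
  · intro v hv
    simp only [mem_filter, mem_univ, true_and, hammingDist, Finset.card_eq_one] at hv
    obtain ⟨i, hi⟩ := hv
    have hdiff : ∀ j, u j ≠ v j ↔ j = i := fun j => by
      simpa using congrArg (j ∈ ·) hi
    refine ⟨⟨i, v i⟩, by simpa [eq_comm] using (hdiff i).2 rfl, ?_⟩
    funext j
    rcases eq_or_ne j i with rfl | hj
    · simp
    · simpa [Function.update_of_ne hj] using mt (hdiff j).1 hj

section Characters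

variable {n q : ℕ} [NeZero q]

theorem sum_stdAddChar_mul (a : ZMod q) :
    ∑ d : ZMod q, ZMod.stdAddChar (d * a) = if a = 0 then (q : ℂ) else 0 := by
  simpa [ZMod.card] using AddChar.sum_mulShift a (ZMod.isPrimitive_stdAddChar q)

def completeGraphEigenvalue (d : ZMod q) : ℂ := if d = 0 then (q : ℂ) - 1 else -1

theorem sum_erase_stdAddChar_mul_sub (a : ZMod q) (c : Fin q) :
    ∑ b ∈ univ.erase c, ZMod.stdAddChar (a * (ZMod.finEquiv q b - ZMod.finEquiv q c)) =
      completeGraphEigenvalue a := by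
  rw [sum_erase_eq_sub (mem_univ c), sub_self, mul_zero, AddChar.map_zero_eq_one,
    Fintype.sum_equiv ((ZMod.finEquiv q).toEquiv.trans (Equiv.subRight (ZMod.finEquiv q c))) _
      (fun d => ZMod.stdAddChar (d * a)) (fun b => by simp [mul_comm]),
    sum_stdAddChar_mul, completeGraphEigenvalue]
  split_ifs <;> ring

noncomputable def hammingChar (x : Fin n → ZMod q) (v : Fin n → Fin q) : ℂ :=
  ∏ i, ZMod.stdAddChar (x i * ZMod.finEquiv q (v i))

theorem hammingChar_update (x : Fin n → ZMod q) (u : Fin n → Fin q) (i : Fin n) (b : Fin q) :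
    hammingChar x (Function.update u i b) =
      ZMod.stdAddChar (x i * (ZMod.finEquiv q b - ZMod.finEquiv q (u i))) * hammingChar x u := by
  rw [hammingChar, hammingChar, ← Finset.mul_prod_erase _ _ (mem_univ i),
    ← Finset.mul_prod_erase _ _ (mem_univ i), Function.update_self, ← mul_assoc,
    ← AddChar.map_add_eq_mul, mul_sub, sub_add_cancel]
  congr 1
  refine Finset.prod_congr rfl fun j hj => ?_
  rw [Function.update_of_ne (ne_of_mem_erase hj)]

theorem adjHamming_mulVec_hammingChar (x : Fin n → ZMod q) :
    adjHamming n q *ᵥ hammingChar x = (∑ i, completeGraphEigenvalue (x i)) • hammingChar x := by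
  funext u
  calc (adjHamming n q *ᵥ hammingChar x) u
      = ∑ v with hammingDist u v = 1, hammingChar x v := by
        simp [mulVec, dotProduct, adjHamming, Finset.sum_filter, hammingDist]
    _ = ∑ i, ∑ b ∈ univ.erase (u i), hammingChar x (Function.update u i b) :=
        sum_hammingDist_eq_one u _
    _ = ((∑ i, completeGraphEigenvalue (x i)) • hammingChar x) u := by
        simp only [hammingChar_update, ← Finset.sum_mul, sum_erase_stdAddChar_mul_sub,
          Pi.smul_apply, smul_eq_mul]

-- `hammingKernel s δ / q` is the entry of `exp (s • A)` for the complete graph `K_q` between two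
-- vertices whose difference is `δ`.
noncomputable def hammingKernel (s : ℂ) (δ : ZMod q) : ℂ :=
  ∑ d : ZMod q, cexp (s * completeGraphEigenvalue d) * ZMod.stdAddChar (d * δ)

theorem hammingKernel_eq (s : ℂ) (δ : ZMod q) :
    hammingKernel s δ = cexp (s * (q - 1)) - cexp (-s) + if δ = 0 then q * cexp (-s) else 0 := by
  have hexp : ∀ d : ZMod q, cexp (s * completeGraphEigenvalue d) =
      cexp (-s) + if d = 0 then cexp (s * (q - 1)) - cexp (-s) else 0 := fun d => by
    unfold completeGraphEigenvalue; split_ifs <;> simp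
  simp only [hammingKernel, hexp, add_mul, sum_add_distrib, ← mul_sum, sum_stdAddChar_mul,
    ite_mul, zero_mul, sum_ite_eq', mem_univ, if_true, AddChar.map_zero_eq_one]
  split_ifs <;> ring

theorem sum_inv_hammingChar_mul_exp (s : ℂ) (v0 v : Fin n → Fin q) :
    ∑ x, (hammingChar x v0)⁻¹ * cexp (s * ∑ i, completeGraphEigenvalue (x i)) * hammingChar x v =
      ∏ i, hammingKernel s (ZMod.finEquiv q (v i) - ZMod.finEquiv q (v0 i)) := by
  simp only [hammingKernel, Fintype.prod_sum, hammingChar, mul_sum, Complex.exp_sum,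
    ← prod_inv_distrib, ← prod_mul_distrib]
  refine Fintype.sum_congr _ _ fun x => Fintype.prod_congr _ _ fun i => ?_
  rw [← AddChar.map_neg_eq_inv, mul_comm _ (cexp _), mul_assoc, ← AddChar.map_add_eq_mul]
  ring_nf

theorem sum_inv_hammingChar_smul (v0 : Fin n → Fin q) :
    ∑ x, (hammingChar x v0)⁻¹ • hammingChar x = (q : ℂ) ^ n • Pi.single v0 1 := by
  funext v
  have h := sum_inv_hammingChar_mul_exp 0 v0 v
  simp only [zero_mul, Complex.exp_zero, mul_one, hammingKernel_eq, neg_zero, sub_self, zero_add,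
    sub_eq_zero, (ZMod.finEquiv q).injective.eq_iff, prod_ite_zero, prod_const, card_univ,
    Fintype.card_fin, mem_univ, forall_const] at h
  simp [Finset.sum_apply, h, Pi.single_apply, funext_iff]

theorem walk_adjHamming_single (v0 : Fin n → Fin q) (t : ℝ) (v : Fin n → Fin q) :
    (q : ℂ) ^ n * walk (adjHamming n q) (Pi.single v0 1) t v =
      ∏ i, hammingKernel (-t * I) (ZMod.finEquiv q (v i) - ZMod.finEquiv q (v0 i)) := by
  have h := Matrix.exp_mulVec_sum_smul (B := (-t * I) • adjHamming n q) (w := hammingChar)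
    (fun x => by rw [smul_mulVec, adjHamming_mulVec_hammingChar, smul_smul])
    fun x => (hammingChar x v0)⁻¹
  rw [sum_inv_hammingChar_smul, mulVec_smul] at h
  rw [walk, ← sum_inv_hammingChar_mul_exp]
  simpa [Finset.sum_apply, mul_right_comm _ _ (hammingChar _ v)] using congrFun h v

theorem walk_adjHamming_single_update (v0 : Fin n → Fin q) (t : ℝ) (i : Fin n) (b : Fin q) :
    (q : ℂ) ^ n * walk (adjHamming n q) (Pi.single v0 1) t (Function.update v0 i b) =
      hammingKernel (-t * I) (ZMod.finEquiv q b - ZMod.finEquiv q (v0 i)) *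
        hammingKernel (-t * I) (0 : ZMod q) ^ (n - 1) := by
  rw [walk_adjHamming_single, ← mul_prod_erase _ _ (mem_univ i), Function.update_self,
    prod_congr rfl fun j hj => by rw [Function.update_of_ne (ne_of_mem_erase hj), sub_self],
    prod_const, card_erase_of_mem (mem_univ i), card_univ, Fintype.card_fin]

theorem norm_hammingKernel_le_two (t : ℝ) {δ : ZMod q} (hδ : δ ≠ 0) :
    ‖hammingKernel (-t * I) δ‖ ≤ 2 := by
  rw [hammingKernel_eq, if_neg hδ, add_zero]
  have h1 : -t * I * (q - 1) = ((-t * (q - 1) : ℝ) : ℂ) * I := by push_cast; ring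
  have h2 : -(-t * I) = (t : ℂ) * I := by ring
  calc _ ≤ ‖cexp (-t * I * (q - 1))‖ + ‖cexp (-(-t * I))‖ := norm_sub_le _ _
    _ = 2 := by rw [h1, h2, norm_exp_ofReal_mul_I, norm_exp_ofReal_mul_I]; norm_num

theorem sq_norm_hammingKernel_of_uniform_mixing {v0 : Fin n → Fin q} {t : ℝ} (hn : n ≠ 0)
    (hmix : ∀ v, ‖walk (adjHamming n q) (Pi.single v0 1) t v‖ ^ 2 = 1 / q ^ n)
    (i : Fin n) (b : Fin q) :
    ‖hammingKernel (-t * I) (ZMod.finEquiv q b - ZMod.finEquiv q (v0 i))‖ ^ 2 = q := by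
  have hq : (0 : ℝ) < q := Nat.cast_pos.mpr (NeZero.pos q)
  have amplitude : ∀ b : Fin q,
      ‖hammingKernel (-t * I) (ZMod.finEquiv q b - ZMod.finEquiv q (v0 i))‖ ^ 2 *
        (‖hammingKernel (-t * I) (0 : ZMod q)‖ ^ 2) ^ (n - 1) = q ^ n := fun b => by
    have h := congrArg (‖·‖ ^ 2) (walk_adjHamming_single_update v0 t i b)
    simp only [norm_mul, norm_pow, mul_pow, hmix, norm_natCast] at h
    rw [← pow_mul, mul_comm 2, pow_mul, ← h]
    field_simp
  have h0 : ‖hammingKernel (-t * I) (0 : ZMod q)‖ ^ 2 = q := by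
    have h := amplitude (v0 i)
    rw [sub_self, ← pow_succ', Nat.sub_add_cancel (Nat.one_le_iff_ne_zero.mpr hn)] at h
    exact (pow_left_inj₀ (by positivity) hq.le hn).mp h
  have h := amplitude b
  rw [h0, ← pow_sub_one_mul hn (q : ℝ), mul_comm _ (q : ℝ)] at h
  exact mul_right_cancel₀ (pow_pos hq _).ne' h

end Characters

/-- For `n ≥ 1` and `q ≥ 5`, the quantum walk on the Hamming graph `H(n,q)` is
never instantaneous uniform mixing. -/
theorem hamming_graph_not_uniform_mixing (n q : ℕ) (hn : 1 ≤ n) (hq : 5 ≤ q)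
    (v0 : Fin n → Fin q) (t : ℝ) :
    ∃ v : Fin n → Fin q,
      ‖walk (adjHamming n q) (Pi.single v0 1) t v‖ ^ 2
        ≠ 1 / q ^ n := by
  have : NeZero q := ⟨by omega⟩
  have : Nontrivial (Fin q) := Fin.nontrivial_iff_two_le.mpr (by omega)
  let i : Fin n := ⟨0, hn⟩
  obtain ⟨b, hb⟩ := exists_ne (v0 i)
  by_contra! hmix
  have h_sq := sq_norm_hammingKernel_of_uniform_mixing (by omega) hmix i b
  have h_le := norm_hammingKernel_le_two t (sub_ne_zero.mpr ((ZMod.finEquiv q).injective.ne hb))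
  have : (5 : ℝ) ≤ q := by exact_mod_cast hq
  nlinarith [norm_nonneg (hammingKernel (-t * I) (ZMod.finEquiv q b - ZMod.finEquiv q (v0 i)))]
end

section
/- Let $n \ge 1$ and let $a, \eta \in \mathbb{Z}_2^n$ with $a \cdot \eta = 1$. Then the sum $S = \sum_{b \in \mathbb{Z}_2^n} \cos\Big(\frac{\pi}{2}\big(|a \oplus b| - |b| + (-1)^{b \cdot \eta}\big)\Big)$ satisfies: $S = 0$ if $|a|$ is even, and $S = (-1)^{(|a|+1)/2}\, 2^n$ if $|a|$ is odd and $a = \eta$, and $S = 0$ if $|a|$ is odd and $a \neq \eta$. -/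
open Matrix Complex Finset Kronecker

lemma zmod2_cases (x : ZMod 2) : x = 0 ∨ x = 1 := by revert x; decide

lemma zv0 : ((0 : ZMod 2)).val = 0 := rfl
lemma zv1 : ((1 : ZMod 2)).val = 1 := rfl

lemma dot_comm {n : ℕ} (a b : Fin n → ZMod 2) : dot a b = dot b a := by
  unfold dot; exact Finset.sum_congr rfl fun i _ => mul_comm _ _

lemma dot_add_left {n : ℕ} (a c b : Fin n → ZMod 2) :
    dot (a + c) b = dot a b + dot c b := by
  unfold dot
  rw [← Finset.sum_add_distrib]
  exact Finset.sum_congr rfl fun i _ => by simp [add_mul]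

/-- weight identity: wt(a+b) + 2|A∩B| = wt a + wt b -/
lemma wt_add_eq {n : ℕ} (a b : Fin n → ZMod 2) :
    wt (a + b) + 2 * (Finset.univ.filter fun i => a i = 1 ∧ b i = 1).card
      = wt a + wt b := by
  classical
  set A := Finset.univ.filter fun i => a i = 1 with hA
  set B := Finset.univ.filter fun i => b i = 1 with hB
  have hAB : (Finset.univ.filter fun i => (a + b) i = 1) = (A ∪ B) \ (A ∩ B) := by
    ext i
    simp only [hA, hB, Finset.mem_filter, Finset.mem_sdiff, Finset.mem_union,
      Finset.mem_inter, Finset.mem_univ, true_and, Pi.add_apply]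
    rcases zmod2_cases (a i) with h1 | h1 <;> rcases zmod2_cases (b i) with h2 | h2 <;>
      rw [h1, h2] <;> simp <;> decide
  have hI : (Finset.univ.filter fun i => a i = 1 ∧ b i = 1) = A ∩ B := by
    ext i; simp [hA, hB, Finset.mem_filter, Finset.mem_inter]
  have hsub : A ∩ B ⊆ A ∪ B := (Finset.inter_subset_left).trans Finset.subset_union_left
  have hle : (A ∩ B).card ≤ (A ∪ B).card := Finset.card_le_card hsub
  have hwab : wt (a + b) = ((A ∪ B) \ (A ∩ B)).card := by
    unfold wt; rw [hAB]
  have hwa : wt a = A.card := rfl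
  have hwb : wt b = B.card := rfl
  rw [hwab, hI, hwa, hwb, Finset.card_sdiff_of_subset hsub]
  have := Finset.card_union_add_card_inter A B
  omega

/-- parity of the dot product equals parity of |A∩B| -/
lemma dot_eq_card {n : ℕ} (a b : Fin n → ZMod 2) :
    dot a b = ((Finset.univ.filter fun i => a i = 1 ∧ b i = 1).card : ZMod 2) := by
  classical
  unfold dot
  have h : ∀ i : Fin n, a i * b i = if (a i = 1 ∧ b i = 1) then 1 else 0 := by
    intro i
    rcases zmod2_cases (a i) with h1 | h1 <;> rcases zmod2_cases (b i) with h2 | h2 <;>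
      rw [h1, h2] <;> simp
  rw [Finset.sum_congr rfl fun i _ => h i, Finset.card_filter]
  push_cast
  rfl

lemma neg_one_pow_val_natCast (m : ℕ) : ((-1 : ℝ)) ^ ((m : ZMod 2)).val = (-1 : ℝ) ^ m := by
  rw [ZMod.val_natCast, ← neg_one_pow_eq_pow_mod_two]

lemma neg_one_pow_val_add_s19 (x y : ZMod 2) :
    ((-1 : ℝ)) ^ (x + y).val = (-1 : ℝ) ^ x.val * (-1 : ℝ) ^ y.val := by
  rcases zmod2_cases x with h | h <;> rcases zmod2_cases y with h' | h' <;>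
    subst h <;> subst h' <;>
    simp only [show ((0:ZMod 2)+0)=0 from rfl, show ((0:ZMod 2)+1)=1 from rfl,
      show ((1:ZMod 2)+0)=1 from rfl, show ((1:ZMod 2)+1)=0 from rfl, zv0, zv1] <;>
    norm_num

lemma neg_one_zpow_sub (p q : ℕ) :
    ((-1 : ℝ)) ^ ((p : ℤ) - (q : ℤ)) = (-1 : ℝ) ^ p * (-1 : ℝ) ^ q := by
  rw [zpow_sub₀ (by norm_num : (-1:ℝ) ≠ 0), zpow_natCast, zpow_natCast,
    div_eq_mul_inv, ← inv_pow, inv_neg, inv_one]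

lemma cos_half_odd (j : ℤ) : Real.cos (Real.pi / 2 * (2 * (j : ℝ) + 1)) = 0 := by
  have h : Real.pi / 2 * (2 * (j : ℝ) + 1) = (j : ℝ) * Real.pi + Real.pi / 2 := by ring
  rw [h, Real.cos_add, Real.cos_pi_div_two, Real.sin_int_mul_pi]
  ring

lemma cos_half_even (j : ℤ) : Real.cos (Real.pi / 2 * (2 * (j : ℝ))) = (-1 : ℝ) ^ j := by
  have h : Real.pi / 2 * (2 * (j : ℝ)) = (j : ℝ) * Real.pi - 0 := by ring
  rw [h, Real.cos_int_mul_pi_sub, Real.cos_zero, mul_one]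

lemma neg_one_pow_val_flip (x : ZMod 2) :
    ((-1 : ℝ)) ^ x.val + ((-1 : ℝ)) ^ (x + 1).val = 0 := by
  rcases zmod2_cases x with h | h <;> subst h <;>
    simp only [show ((0:ZMod 2)+1)=1 from rfl, show ((1:ZMod 2)+1)=0 from rfl, zv0, zv1] <;>
    norm_num

/-- character sum over the hypercube: nontrivial character -/
lemma char_sum_zero {n : ℕ} (c : Fin n → ZMod 2) (hc : c ≠ 0) :
    ∑ b : Fin n → ZMod 2, ((-1 : ℝ)) ^ (dot c b).val = 0 := by
  classical
  obtain ⟨i, hi⟩ : ∃ i, c i = 1 := by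
    by_contra h
    push_neg at h
    apply hc
    funext j
    rcases zmod2_cases (c j) with h' | h'
    · exact h'
    · exact absurd h' (h j)
  apply Finset.sum_ninvolution (g := fun b => Function.update b i (b i + 1))
  · intro b
    have hdot : dot c (Function.update b i (b i + 1)) = dot c b + 1 := by
      unfold dot
      have h : ∀ j : Fin n, c j * Function.update b i (b i + 1) j =
          c j * b j + (if j = i then 1 else 0) := by
        intro j
        by_cases hj : j = i
        · subst hj
          rw [Function.update_self, hi, one_mul, one_mul, if_pos rfl]
        · rw [Function.update_of_ne hj, if_neg hj, add_zero]
      rw [Finset.sum_congr rfl fun j _ => h j, Finset.sum_add_distrib]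
      simp
    rw [hdot]
    exact neg_one_pow_val_flip _
  · intro b _ heq
    have h := congrFun heq i
    rw [Function.update_self] at h
    rcases zmod2_cases (b i) with h' | h' <;> rw [h'] at h <;> simp at h
  · intro b; exact Finset.mem_univ _
  · intro b
    funext j
    by_cases hj : j = i
    · subst hj
      simp only [Function.update_self]
      rcases zmod2_cases (b j) with h | h <;> rw [h] <;> decide
    · simp [Function.update_of_ne hj]

lemma char_sum_all {n : ℕ} :
    ∑ b : Fin n → ZMod 2, ((-1 : ℝ)) ^ (dot (0 : Fin n → ZMod 2) b).val = 2 ^ n := by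
  have h : ∀ b : Fin n → ZMod 2, dot (0 : Fin n → ZMod 2) b = 0 := by
    intro b; unfold dot; simp
  simp only [h, zv0, pow_zero]
  simp [Finset.card_univ]

/-- Evaluation of `S = ∑_b cos((π/2)(|a ⊕ b| - |b| + (-1)^{b·η}))` when
`a·η = 1`: it vanishes unless `|a|` is odd and `a = η`, in which case it
equals `(-1)^{(|a|+1)/2} 2^n`. -/
theorem cosine_sum_evaluation (n : ℕ) (hn : 1 ≤ n)
    (a η : Fin n → ZMod 2) (haη : dot a η = 1) :
    (Even (wt a) →
      ∑ b : Fin n → ZMod 2,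
        Real.cos (Real.pi / 2 *
          ((wt (a + b) : ℝ) - (wt b : ℝ) + (-1 : ℝ) ^ (dot b η).val)) = 0) ∧
    (Odd (wt a) → a = η →
      ∑ b : Fin n → ZMod 2,
        Real.cos (Real.pi / 2 *
          ((wt (a + b) : ℝ) - (wt b : ℝ) + (-1 : ℝ) ^ (dot b η).val))
        = (-1 : ℝ) ^ ((wt a + 1) / 2) * 2 ^ n) ∧
    (Odd (wt a) → a ≠ η →
      ∑ b : Fin n → ZMod 2,
        Real.cos (Real.pi / 2 *
          ((wt (a + b) : ℝ) - (wt b : ℝ) + (-1 : ℝ) ^ (dot b η).val)) = 0) := by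
  classical
  set W := wt a with hW
  have key : ∀ b : Fin n → ZMod 2,
      ((wt (a + b) : ℝ) - (wt b : ℝ)) =
        (W : ℝ) - 2 * ((Finset.univ.filter fun i => a i = 1 ∧ b i = 1).card : ℝ) := by
    intro b
    have h := wt_add_eq a b
    have h2 : (wt (a + b) : ℝ) + 2 * ((Finset.univ.filter fun i => a i = 1 ∧ b i = 1).card : ℝ)
        = (W : ℝ) + (wt b : ℝ) := by exact_mod_cast congrArg (Nat.cast (R := ℝ)) h
    linarith
  refine ⟨?_, ?_, ?_⟩
  · -- even case: every term vanishes
    intro hEven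
    apply Finset.sum_eq_zero
    intro b _
    obtain ⟨s, hs⟩ := hEven
    set M := (Finset.univ.filter fun i => a i = 1 ∧ b i = 1).card with hM
    rcases zmod2_cases (dot b η) with h | h
    · have harg : (wt (a + b) : ℝ) - (wt b : ℝ) + (-1 : ℝ) ^ (dot b η).val
          = 2 * (((s : ℤ) - M : ℤ) : ℝ) + 1 := by
        rw [key b, h, zv0, pow_zero, hs]
        push_cast
        ring
      rw [harg]
      exact cos_half_odd _
    · have harg : (wt (a + b) : ℝ) - (wt b : ℝ) + (-1 : ℝ) ^ (dot b η).val
          = 2 * (((s : ℤ) - M - 1 : ℤ) : ℝ) + 1 := by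
        rw [key b, h, zv1, pow_one, hs]
        push_cast
        ring
      rw [harg]
      exact cos_half_odd _
  all_goals (
    intro hOdd
    obtain ⟨t, ht⟩ := hOdd
    have term_eq : ∀ b : Fin n → ZMod 2,
        Real.cos (Real.pi / 2 *
          ((wt (a + b) : ℝ) - (wt b : ℝ) + (-1 : ℝ) ^ (dot b η).val))
        = -(-1 : ℝ) ^ t * (-1 : ℝ) ^ (dot (a + η) b).val := by
      intro b
      set M := (Finset.univ.filter fun i => a i = 1 ∧ b i = 1).card with hM
      have hMdot : ((-1 : ℝ)) ^ (dot a b).val = (-1 : ℝ) ^ M := by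
        rw [dot_eq_card a b, neg_one_pow_val_natCast]
      have hsplit : ((-1 : ℝ)) ^ (dot (a + η) b).val
          = (-1 : ℝ) ^ M * (-1 : ℝ) ^ (dot b η).val := by
        rw [dot_add_left, neg_one_pow_val_add_s19, hMdot, dot_comm η b]
      rcases zmod2_cases (dot b η) with h | h
      · have harg : (wt (a + b) : ℝ) - (wt b : ℝ) + (-1 : ℝ) ^ (dot b η).val
            = 2 * ((((t : ℤ) + 1 - M) : ℤ) : ℝ) := by
          rw [key b, h, zv0, pow_zero, ht]
          push_cast
          ring
        rw [harg, cos_half_even, hsplit, h, zv0, pow_zero, mul_one]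
        have h2 : ((t : ℤ) + 1 - M) = (((t + 1 : ℕ)) : ℤ) - (M : ℤ) := by push_cast; ring
        rw [h2, neg_one_zpow_sub, pow_succ]
        ring
      · have harg : (wt (a + b) : ℝ) - (wt b : ℝ) + (-1 : ℝ) ^ (dot b η).val
            = 2 * ((((t : ℤ) - M) : ℤ) : ℝ) := by
          rw [key b, h, zv1, pow_one, ht]
          push_cast
          ring
        rw [harg, cos_half_even, hsplit, h, zv1, pow_one, neg_one_zpow_sub]
        ring
    rw [Finset.sum_congr rfl fun b _ => term_eq b, ← Finset.mul_sum]
    first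
    | (intro hEq
       subst hEq
       have h0 : a + a = 0 := by
         funext i; exact CharTwo.add_self_eq_zero _
       rw [h0, char_sum_all]
       have hdiv : (W + 1) / 2 = t + 1 := by omega
       rw [hdiv, pow_succ]
       ring)
    | (intro hNe
       have h0 : a + η ≠ 0 := by
         intro h
         apply hNe
         funext i
         have h1 := congrFun h i
         simp only [Pi.add_apply, Pi.zero_apply] at h1
         rcases zmod2_cases (a i) with ha1 | ha1 <;> rcases zmod2_cases (η i) with hb1 | hb1 <;>
           rw [ha1, hb1] <;> rw [ha1, hb1] at h1 <;> first | rfl | simp at h1 | exact absurd h1 (by decide)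
       rw [char_sum_zero _ h0]
       ring))
end
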